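/- Let c = s(σ 0) * s(σ 1) * s(σ 2) * s(σ 3) be any Coxeter element of the Coxeter group W of type F₄, where σ : Fin 4 ≃ Fin 4 is a bijection. Then ℓ(c⁶) = 24, i.e. the sixth power of c has length 24 (the number of positive roots of F₄), so c⁶ is the longest element of W. -/

import Mathlib

/-- The Coxeter system of type `F₄` on its Coxeter group `CoxeterMatrix.F₄.Group`. -/
def f4cs : CoxeterSystem CoxeterMatrix.F₄ CoxeterMatrix.F₄.Group :=
  CoxeterMatrix.F₄.toCoxeterSystem

/-- The simple reflections `s i` of the Coxeter group of type `F₄`. -/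
def f4s (i : Fin 4) : CoxeterMatrix.F₄.Group := f4cs.simple i

namespace F4Aux

structure Vec where
  a : ℤ
  b : ℤ
  c : ℤ
  d : ℤ
deriving DecidableEq

structure Mat where
  r0 : Vec
  r1 : Vec
  r2 : Vec
  r3 : Vec
deriving DecidableEq

/-- row times matrix -/
def rowMul (r : Vec) (m : Mat) : Vec :=
  ⟨r.a * m.r0.a + r.b * m.r1.a + r.c * m.r2.a + r.d * m.r3.a,
   r.a * m.r0.b + r.b * m.r1.b + r.c * m.r2.b + r.d * m.r3.b,
   r.a * m.r0.c + r.b * m.r1.c + r.c * m.r2.c + r.d * m.r3.c,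
   r.a * m.r0.d + r.b * m.r1.d + r.c * m.r2.d + r.d * m.r3.d⟩

def mulM (x y : Mat) : Mat := ⟨rowMul x.r0 y, rowMul x.r1 y, rowMul x.r2 y, rowMul x.r3 y⟩

def oneM : Mat := ⟨⟨1,0,0,0⟩, ⟨0,1,0,0⟩, ⟨0,0,1,0⟩, ⟨0,0,0,1⟩⟩

instance : Monoid Mat where
  mul := mulM
  one := oneM
  mul_assoc x y z := by
    obtain ⟨⟨_,_,_,_⟩,⟨_,_,_,_⟩,⟨_,_,_,_⟩,⟨_,_,_,_⟩⟩ := x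
    obtain ⟨⟨_,_,_,_⟩,⟨_,_,_,_⟩,⟨_,_,_,_⟩,⟨_,_,_,_⟩⟩ := y
    obtain ⟨⟨_,_,_,_⟩,⟨_,_,_,_⟩,⟨_,_,_,_⟩,⟨_,_,_,_⟩⟩ := z
    show mulM (mulM _ _) _ = mulM _ (mulM _ _)
    simp only [mulM, rowMul, Mat.mk.injEq, Vec.mk.injEq]
    and_intros <;> ring
  one_mul x := by
    obtain ⟨⟨_,_,_,_⟩,⟨_,_,_,_⟩,⟨_,_,_,_⟩,⟨_,_,_,_⟩⟩ := x
    show mulM oneM _ = _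
    simp only [mulM, rowMul, oneM, Mat.mk.injEq, Vec.mk.injEq]
    and_intros <;> ring
  mul_one x := by
    obtain ⟨⟨_,_,_,_⟩,⟨_,_,_,_⟩,⟨_,_,_,_⟩,⟨_,_,_,_⟩⟩ := x
    show mulM _ oneM = _
    simp only [mulM, rowMul, oneM, Mat.mk.injEq, Vec.mk.injEq]
    and_intros <;> ring

theorem mul_def (x y : Mat) : x * y = mulM x y := rfl
theorem one_def : (1 : Mat) = oneM := rfl

/-- matrix acting on a column vector -/
def act (m : Mat) (v : Vec) : Vec :=
  ⟨m.r0.a * v.a + m.r0.b * v.b + m.r0.c * v.c + m.r0.d * v.d,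
   m.r1.a * v.a + m.r1.b * v.b + m.r1.c * v.c + m.r1.d * v.d,
   m.r2.a * v.a + m.r2.b * v.b + m.r2.c * v.c + m.r2.d * v.d,
   m.r3.a * v.a + m.r3.b * v.b + m.r3.c * v.c + m.r3.d * v.d⟩

theorem act_mul (x y : Mat) (v : Vec) : act (x * y) v = act x (act y v) := by
  obtain ⟨⟨_,_,_,_⟩,⟨_,_,_,_⟩,⟨_,_,_,_⟩,⟨_,_,_,_⟩⟩ := x
  obtain ⟨⟨_,_,_,_⟩,⟨_,_,_,_⟩,⟨_,_,_,_⟩,⟨_,_,_,_⟩⟩ := y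
  obtain ⟨_,_,_,_⟩ := v
  rw [mul_def]
  simp only [mulM, rowMul, act, Vec.mk.injEq]
  and_intros <;> ring

theorem act_one (v : Vec) : act 1 v = v := by
  obtain ⟨_,_,_,_⟩ := v
  rw [one_def]
  simp only [oneM, act, Vec.mk.injEq]
  and_intros <;> ring

def neg (v : Vec) : Vec := ⟨-v.a, -v.b, -v.c, -v.d⟩

/-- The simple reflections of F₄ acting on the root lattice (basis: simple roots). -/
def R : Fin 4 → Mat :=
  ![⟨⟨-1,1,0,0⟩, ⟨0,1,0,0⟩, ⟨0,0,1,0⟩, ⟨0,0,0,1⟩⟩,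
    ⟨⟨1,0,0,0⟩, ⟨1,-1,2,0⟩, ⟨0,0,1,0⟩, ⟨0,0,0,1⟩⟩,
    ⟨⟨1,0,0,0⟩, ⟨0,1,0,0⟩, ⟨0,1,-1,1⟩, ⟨0,0,0,1⟩⟩,
    ⟨⟨1,0,0,0⟩, ⟨0,1,0,0⟩, ⟨0,0,1,0⟩, ⟨0,0,1,-1⟩⟩]

/-- The simple roots. -/
def e : Fin 4 → Vec := ![⟨1,0,0,0⟩, ⟨0,1,0,0⟩, ⟨0,0,1,0⟩, ⟨0,0,0,1⟩]

/-- The 24 positive roots of F₄ in simple-root coordinates. -/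
def P : List Vec :=
  [⟨0,0,0,1⟩, ⟨0,0,1,0⟩, ⟨0,0,1,1⟩, ⟨0,1,0,0⟩, ⟨0,1,1,0⟩, ⟨0,1,1,1⟩,
   ⟨0,2,1,0⟩, ⟨0,2,1,1⟩, ⟨0,2,2,1⟩, ⟨1,0,0,0⟩, ⟨1,1,0,0⟩, ⟨1,1,1,0⟩,
   ⟨1,1,1,1⟩, ⟨1,2,1,0⟩, ⟨1,2,1,1⟩, ⟨1,2,2,1⟩, ⟨1,3,2,1⟩, ⟨2,2,1,0⟩,
   ⟨2,2,1,1⟩, ⟨2,2,2,1⟩, ⟨2,3,2,1⟩, ⟨2,4,2,1⟩, ⟨2,4,3,1⟩, ⟨2,4,3,2⟩]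

def allR : List Vec := P ++ P.map neg

def prodL (ω : List (Fin 4)) : Mat := (ω.map R).prod

theorem prodL_nil : prodL [] = 1 := rfl

theorem prodL_cons (i : Fin 4) (ω : List (Fin 4)) : prodL (i :: ω) = R i * prodL ω := by
  rw [prodL, prodL, List.map_cons, List.prod_cons]

def NN (m : Mat) : ℕ := P.countP (fun v => decide (neg (act m v) ∈ P))

def actW (ω : List (Fin 4)) (v : Vec) : Vec := ω.foldr (fun i u => act (R i) u) v

theorem hRR : ∀ i : Fin 4, R i * R i = 1 := by decide
theorem D2 : ∀ v ∈ P, neg v ∉ P := by decide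
theorem D1 : ∀ i : Fin 4, ∀ v ∈ P, v ≠ e i → act (R i) v ∈ P := by decide
theorem DR : ∀ i : Fin 4, ∀ v ∈ allR, act (R i) v ∈ allR := by decide
theorem Pnodup : P.Nodup := by decide
theorem hlift : CoxeterMatrix.IsLiftable CoxeterMatrix.F₄ R :=
  show ∀ i i', (R i * R i') ^ CoxeterMatrix.F₄ i i' = 1 by decide

theorem countP_or_le {α : Type*} (l : List α) (p q : α → Bool) :
    l.countP (fun a => p a || q a) ≤ l.countP p + l.countP q := by
  induction l with
  | nil => simp
  | cons a l ih =>
    simp only [List.countP_cons]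
    rcases Bool.eq_false_or_eq_true (p a) with hp | hp <;>
      rcases Bool.eq_false_or_eq_true (q a) with hq | hq <;>
      simp [hp, hq] <;> omega

theorem countP_le_one {α : Type*} {l : List α} (hn : l.Nodup) (p : α → Bool)
    (h : ∀ x ∈ l, ∀ y ∈ l, p x → p y → x = y) : l.countP p ≤ 1 := by
  induction l with
  | nil => simp
  | cons a l ih =>
    rw [List.nodup_cons] at hn
    rw [List.countP_cons]
    cases hp : p a
    · have := ih hn.2 (fun x hx y hy => h x (List.mem_cons_of_mem a hx) y (List.mem_cons_of_mem a hy))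
      simp [hp]
      omega
    · have h0 : l.countP p = 0 := by
        rw [List.countP_eq_zero]
        intro b hb hpb
        exact hn.1 (h b (List.mem_cons_of_mem a hb) a List.mem_cons_self hpb hp ▸ hb)
      simp [hp, h0]

theorem mem_allR_iff (v : Vec) : v ∈ allR ↔ v ∈ P ∨ neg v ∈ P := by
  constructor
  · intro hv
    rcases List.mem_append.mp hv with h | h
    · exact Or.inl h
    · right
      rcases List.mem_map.mp h with ⟨u, hu, rfl⟩
      have : neg (neg u) = u := by obtain ⟨_,_,_,_⟩ := u; simp [neg]
      rwa [this]
  · rintro (h | h)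
    · exact List.mem_append.mpr (Or.inl h)
    · refine List.mem_append.mpr (Or.inr ?_)
      refine List.mem_map.mpr ⟨neg v, h, ?_⟩
      obtain ⟨_,_,_,_⟩ := v; simp [neg]

/-- The key inequality: multiplying by a simple reflection increases `NN` by at most 1. -/
theorem NN_step (i : Fin 4) (m : Mat)
    (hinv : ∃ m', m' * m = 1) (hroots : ∀ v ∈ P, act m v ∈ allR) :
    NN (R i * m) ≤ NN m + 1 := by
  obtain ⟨m', hm'⟩ := hinv
  have hinj : ∀ v w : Vec, act m v = act m w → v = w := by
    intro v w h
    have hv : act m' (act m v) = v := by rw [← act_mul, hm', act_one]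
    have hw : act m' (act m w) = w := by rw [← act_mul, hm', act_one]
    rw [← hv, ← hw, h]
  have claim : ∀ v ∈ P, (decide (neg (act (R i * m) v) ∈ P) : Bool) = true →
      (decide (neg (act m v) ∈ P) || decide (act m v = e i)) = true := by
    intro v hv h1
    rw [decide_eq_true_iff] at h1
    by_contra hcon
    rw [Bool.or_eq_true, decide_eq_true_iff, decide_eq_true_iff] at hcon
    push_neg at hcon
    obtain ⟨hnp, hne⟩ := hcon
    have hroot : act m v ∈ P := by
      rcases (mem_allR_iff (act m v)).mp (hroots v hv) with h | h
      · exact h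
      · exact absurd h hnp
    have h2 : act (R i) (act m v) ∈ P := D1 i (act m v) hroot hne
    rw [act_mul] at h1
    exact D2 _ h2 h1
  calc NN (R i * m)
      ≤ P.countP (fun v => decide (neg (act m v) ∈ P) || decide (act m v = e i)) :=
        List.countP_mono_left claim
    _ ≤ NN m + P.countP (fun v => decide (act m v = e i)) := countP_or_le P _ _
    _ ≤ NN m + 1 := by
        have : P.countP (fun v => decide (act m v = e i)) ≤ 1 := by
          refine countP_le_one Pnodup _ ?_
          intro x _ y _ hx hy
          rw [decide_eq_true_iff] at hx hy
          exact hinj x y (hx.trans hy.symm)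
        omega

theorem invariants (ω : List (Fin 4)) :
    (∃ m', m' * prodL ω = 1) ∧ (∀ v ∈ allR, act (prodL ω) v ∈ allR) ∧
      NN (prodL ω) ≤ ω.length := by
  induction ω with
  | nil =>
    refine ⟨⟨1, one_mul 1⟩, ?_, ?_⟩
    · intro v hv; rwa [prodL_nil, act_one]
    · show NN (1 : Mat) ≤ 0
      have : NN (1 : Mat) = 0 := by
        rw [NN, List.countP_eq_zero]
        intro v hv
        simp only [act_one, decide_eq_true_iff]
        exact fun h => D2 v hv h
      omega
  | cons i ω ih =>
    obtain ⟨hinv, hroots, hlen⟩ := ih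
    have hp : prodL (i :: ω) = R i * prodL ω := prodL_cons i ω
    refine ⟨?_, ?_, ?_⟩
    · obtain ⟨m', hm'⟩ := hinv
      refine ⟨m' * R i, ?_⟩
      rw [hp, mul_assoc, ← mul_assoc (R i), hRR i, one_mul, hm']
    · intro v hv
      rw [hp, act_mul]
      exact DR i _ (hroots v hv)
    · have := NN_step i (prodL ω) hinv
        (fun v hv => hroots v ((mem_allR_iff v).mpr (Or.inl hv)))
      rw [hp]
      calc NN (R i * prodL ω) ≤ NN (prodL ω) + 1 := this
        _ ≤ ω.length + 1 := by omega
        _ = (i :: ω).length := by simp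

/-- The lift of the F₄ Coxeter group to the matrix monoid. -/
def φ : CoxeterMatrix.F₄.Group →* Mat := f4cs.lift ⟨R, hlift⟩

theorem φ_simple (i : Fin 4) : φ (f4s i) = R i := f4cs.lift_apply_simple hlift i

theorem φ_wordProd (ω : List (Fin 4)) : φ (f4cs.wordProd ω) = prodL ω := by
  rw [CoxeterSystem.wordProd, prodL, MonoidHom.map_list_prod, List.map_map]
  exact congrArg List.prod (List.map_congr_left (fun i _ => φ_simple i))

theorem NN_le_length (w : CoxeterMatrix.F₄.Group) : NN (φ w) ≤ f4cs.length w := by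
  obtain ⟨ω, hlen, rfl⟩ := f4cs.exists_reduced_word w
  rw [φ_wordProd]
  exact (invariants ω).2.2.trans (le_of_eq (Eq.symm hlen))

def actW_def (ω : List (Fin 4)) (v : Vec) : actW ω v = act (prodL ω) v := by
  induction ω with
  | nil => rw [actW, List.foldr_nil, prodL_nil, act_one]
  | cons i ω ih =>
    show act (R i) (actW ω v) = _
    rw [ih, prodL_cons, act_mul]

def NNW (ω : List (Fin 4)) : ℕ := P.countP (fun v => decide (neg (actW ω v) ∈ P))

theorem NNW_eq (ω : List (Fin 4)) : NNW ω = NN (prodL ω) := by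
  rw [NNW, NN]
  congr 1
  funext v
  rw [actW_def]

set_option maxRecDepth 100000 in
set_option maxHeartbeats 3200000 in
theorem bigH' : ∀ a b c d : Fin 4, a = b ∨ a = c ∨ a = d ∨ b = c ∨ b = d ∨ c = d ∨
    NNW [a,b,c,d,a,b,c,d,a,b,c,d,a,b,c,d,a,b,c,d,a,b,c,d] = 24 := by decide

theorem bigH (a b c d : Fin 4) (hab : a ≠ b) (hac : a ≠ c) (had : a ≠ d)
    (hbc : b ≠ c) (hbd : b ≠ d) (hcd : c ≠ d) :
    NNW [a,b,c,d,a,b,c,d,a,b,c,d,a,b,c,d,a,b,c,d,a,b,c,d] = 24 := by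
  rcases bigH' a b c d with h|h|h|h|h|h|h <;> first
    | exact h
    | exact absurd h (by assumption)

end F4Aux

open F4Aux in
/-- The sixth power of any Coxeter element of the Coxeter group of type `F₄` has
length `24` (the number of positive roots of `F₄`), hence is the longest element. -/
theorem f4_coxeterElement_pow_six_length (σ : Equiv.Perm (Fin 4)) :
    f4cs.length ((f4s (σ 0) * f4s (σ 1) * f4s (σ 2) * f4s (σ 3)) ^ 6) = 24 := by
  set a := σ 0 with ha
  set b := σ 1 with hb
  set c := σ 2 with hc
  set d := σ 3 with hd
  have hab : a ≠ b := σ.injective.ne (by decide)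
  have hac : a ≠ c := σ.injective.ne (by decide)
  have had : a ≠ d := σ.injective.ne (by decide)
  have hbc : b ≠ c := σ.injective.ne (by decide)
  have hbd : b ≠ d := σ.injective.ne (by decide)
  have hcd : c ≠ d := σ.injective.ne (by decide)
  set ω : List (Fin 4) := [a,b,c,d,a,b,c,d,a,b,c,d,a,b,c,d,a,b,c,d,a,b,c,d] with hω
  have hprod : f4cs.wordProd ω = (f4s a * f4s b * f4s c * f4s d) ^ 6 := by
    have h1 : f4cs.wordProd [a,b,c,d] = f4s a * f4s b * f4s c * f4s d := by
      simp [CoxeterSystem.wordProd, f4s, mul_assoc]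
    have h2 : ω = [a,b,c,d] ++ ([a,b,c,d] ++ ([a,b,c,d] ++ ([a,b,c,d] ++
        ([a,b,c,d] ++ [a,b,c,d])))) := by simp [hω]
    rw [h2]
    simp only [CoxeterSystem.wordProd_append, h1]
    simp only [pow_succ, pow_zero, one_mul, mul_assoc]
  have hupper : f4cs.length ((f4s a * f4s b * f4s c * f4s d) ^ 6) ≤ 24 := by
    rw [← hprod]
    have := f4cs.length_wordProd_le ω
    simpa [hω] using this
  have hlower : 24 ≤ f4cs.length ((f4s a * f4s b * f4s c * f4s d) ^ 6) := by
    have h24 : NN (φ ((f4s a * f4s b * f4s c * f4s d) ^ 6)) = 24 := by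
      rw [← hprod, φ_wordProd, ← NNW_eq]
      exact bigH a b c d hab hac had hbc hbd hcd
    have := NN_le_length ((f4s a * f4s b * f4s c * f4s d) ^ 6)
    omega
  omega
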